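/- arXiv:1306.3601 — 4 statements merged into one kernel-verified Lean document; each statement's English description precedes it below -/
import Mathlib

section
/- For any 1 < p ≤ 2 and any vectors x, y in ℓ_p (or ℝ^d with the p-norm), (‖x‖_p^p + ‖y‖_p^p)/2 ≤ ‖(x+y)/2‖_p^p + ‖(x-y)/2‖_p^p. -/
noncomputable def pnorm (p : ℝ) {d : ℕ} (x : Fin d → ℝ) : ℝ :=
  (∑ i, |x i| ^ p) ^ (1 / p)

/-! For `p ≤ 2`, write `|t| ^ p = (t ^ 2) ^ (p / 2)` with `p / 2 ≤ 1`. Concavity of `s ↦ s ^ (p / 2)`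
at the points `(u + v) ^ 2`, `(u - v) ^ 2`, whose mean is `u ^ 2 + v ^ 2`, followed by its
subadditivity, gives `|u + v| ^ p + |u - v| ^ p ≤ 2 (|u| ^ p + |v| ^ p)`. Applied coordinatewise to
`u = (x + y) / 2`, `v = (x - y) / 2` and summed, this is the inequality for `pnorm p ^ p`. -/

lemma abs_rpow_eq_sq_rpow_half (p t : ℝ) : |t| ^ p = (t ^ 2) ^ (p / 2) := by
  rw [← sq_abs, ← Real.rpow_natCast, ← Real.rpow_mul (abs_nonneg t)]
  congr 1
  ring

lemma abs_add_rpow_add_abs_sub_rpow_le {p : ℝ} (hp0 : 0 ≤ p) (hp2 : p ≤ 2) (u v : ℝ) :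
    |u + v| ^ p + |u - v| ^ p ≤ 2 * (|u| ^ p + |v| ^ p) := by
  simp only [abs_rpow_eq_sq_rpow_half p]
  have hr0 : 0 ≤ p / 2 := by positivity
  have hr1 : p / 2 ≤ 1 := by linarith
  have hconc := (Real.concaveOn_rpow hr0 hr1).2 (Set.mem_Ici.2 (sq_nonneg (u + v)))
    (Set.mem_Ici.2 (sq_nonneg (u - v))) (by norm_num : (0 : ℝ) ≤ 1 / 2)
    (by norm_num : (0 : ℝ) ≤ 1 / 2) (by norm_num)
  have hmean : 1 / 2 * (u + v) ^ 2 + 1 / 2 * (u - v) ^ 2 = u ^ 2 + v ^ 2 := by ring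
  simp only [smul_eq_mul, hmean] at hconc
  calc ((u + v) ^ 2) ^ (p / 2) + ((u - v) ^ 2) ^ (p / 2) ≤ 2 * (u ^ 2 + v ^ 2) ^ (p / 2) := by
        linarith
    _ ≤ 2 * ((u ^ 2) ^ (p / 2) + (v ^ 2) ^ (p / 2)) := by
        gcongr
        exact Real.rpow_add_le_add_rpow (sq_nonneg u) (sq_nonneg v) hr0 hr1

lemma pnorm_rpow {p : ℝ} (hp : p ≠ 0) {d : ℕ} (x : Fin d → ℝ) :
    pnorm p x ^ p = ∑ i, |x i| ^ p := by
  rw [pnorm, ← Real.rpow_mul (by positivity), one_div_mul_cancel hp, Real.rpow_one]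

/-- p-uniform smoothness of ℓ_p for 1 < p ≤ 2. -/
theorem lp_uniform_smoothness (p : ℝ) (hp1 : 1 < p) (hp2 : p ≤ 2) (d : ℕ)
    (x y : Fin d → ℝ) :
    (pnorm p x ^ p + pnorm p y ^ p) / 2 ≤
      pnorm p ((x + y) / 2) ^ p + pnorm p ((x - y) / 2) ^ p := by
  have hp0 : 0 < p := by linarith
  simp only [pnorm_rpow hp0.ne', ← Finset.sum_add_distrib, Finset.sum_div]
  refine Finset.sum_le_sum fun i _ => ?_
  have h := abs_add_rpow_add_abs_sub_rpow_le hp0.le hp2 ((x i + y i) / 2) ((x i - y i) / 2)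
  have hx : (x i + y i) / 2 + (x i - y i) / 2 = x i := by ring
  have hy : (x i + y i) / 2 - (x i - y i) / 2 = y i := by ring
  rw [hx, hy] at h
  simp only [Pi.add_apply, Pi.sub_apply, Pi.div_apply, Pi.ofNat_apply]
  linarith
end

section
/- For any 1 < p ≤ 2 and any vectors x, y in ℝ^d with the p-norm, (‖x‖_p^2 + ‖y‖_p^2)/2 ≥ ‖(x+y)/2‖_p^2 + (p-1)·‖(x-y)/2‖_p^2. -/
open Real

section Scalar

open Set

lemma hasDerivAt_one_add_rpow (q : ℝ) {s : ℝ} (hs : -1 < s) :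
    HasDerivAt (fun t => (1 + t) ^ q) (q * (1 + s) ^ (q - 1)) s := by
  simpa using ((hasDerivAt_id s).const_add 1).rpow_const (p := q)
    (Or.inl (by simp only [id]; linarith))

lemma hasDerivAt_one_sub_rpow (q : ℝ) {s : ℝ} (hs : s < 1) :
    HasDerivAt (fun t => (1 - t) ^ q) (-(q * (1 - s) ^ (q - 1))) s := by
  simpa using ((hasDerivAt_id s).const_sub 1).rpow_const (p := q)
    (Or.inl (by simp only [id]; linarith))

lemma apply_zero_le_of_hasDerivAt_nonneg {f f' : ℝ → ℝ} (hf : ContinuousOn f (Icc 0 1))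
    (hf' : ∀ s ∈ Ioo (0 : ℝ) 1, HasDerivAt f (f' s) s) (hf'₀ : ∀ s ∈ Ioo (0 : ℝ) 1, 0 ≤ f' s)
    {t : ℝ} (ht : t ∈ Icc (0 : ℝ) 1) : f 0 ≤ f t := by
  refine monotoneOn_of_hasDerivWithinAt_nonneg (convex_Icc 0 1) hf
    (fun s hs => (hf' s (by rwa [interior_Icc] at hs)).hasDerivWithinAt)
    (fun s hs => hf'₀ s (by rwa [interior_Icc] at hs)) (left_mem_Icc.2 zero_le_one) ht ht.1

lemma mul_le_one_add_rpow_sub_one_sub_rpow {q : ℝ} (hq0 : 0 ≤ q) (hq1 : q ≤ 1) {t : ℝ}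
    (ht : t ∈ Icc (0 : ℝ) 1) : 2 * q * t ≤ (1 + t) ^ q - (1 - t) ^ q := by
  have key := apply_zero_le_of_hasDerivAt_nonneg
    (f := fun t => (1 + t) ^ q - (1 - t) ^ q - 2 * q * t)
    (f' := fun s => q * ((1 + s) ^ (q - 1) + (1 - s) ^ (q - 1) - 2)) (by fun_prop)
    (fun s hs => by
      refine (((hasDerivAt_one_add_rpow q (by linarith [hs.1])).sub
        (hasDerivAt_one_sub_rpow q hs.2)).sub
        ((hasDerivAt_id' s).const_mul (2 * q))).congr_deriv ?_
      ring)
    (fun s ⟨hs0, hs1⟩ => by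
      have h1 : 0 < 1 + s := by linarith
      have h2 : 0 < 1 - s := by linarith
      -- AM-GM: the product of the two powers is `(1 - s ^ 2) ^ (q - 1) ≥ 1`
      have hprod : 1 ≤ (1 + s) ^ (q - 1) * (1 - s) ^ (q - 1) := by
        rw [← mul_rpow h1.le h2.le]
        exact one_le_rpow_of_pos_of_le_one_of_nonpos (mul_pos h1 h2) (by nlinarith) (by linarith)
      have := rpow_pos_of_pos h1 (q - 1)
      have := rpow_pos_of_pos h2 (q - 1)
      nlinarith [sq_nonneg ((1 + s) ^ (q - 1) - (1 - s) ^ (q - 1))]) ht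
  simp only [add_zero, one_rpow, sub_zero, sub_self, mul_zero, sub_nonneg] at key
  linarith

lemma two_add_mul_sq_le_one_add_rpow_add_one_sub_rpow {p : ℝ} (hp1 : 1 ≤ p) (hp2 : p ≤ 2)
    {t : ℝ} (ht : t ∈ Icc (0 : ℝ) 1) : 2 + p * (p - 1) * t ^ 2 ≤ (1 + t) ^ p + (1 - t) ^ p := by
  have hp0 : 0 ≤ p := by linarith
  have key := apply_zero_le_of_hasDerivAt_nonneg
    (f := fun t => (1 + t) ^ p + (1 - t) ^ p - p * (p - 1) * t ^ 2)
    (f' := fun s => p * ((1 + s) ^ (p - 1) - (1 - s) ^ (p - 1) - 2 * (p - 1) * s)) (by fun_prop)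
    (fun s hs => by
      refine (((hasDerivAt_one_add_rpow p (by linarith [hs.1])).add
        (hasDerivAt_one_sub_rpow p hs.2)).sub
        ((hasDerivAt_pow 2 s).const_mul (p * (p - 1)))).congr_deriv ?_
      ring)
    (fun s hs => mul_nonneg (by linarith) (by
      linarith [mul_le_one_add_rpow_sub_one_sub_rpow (q := p - 1) (by linarith) (by linarith)
        (Ioo_subset_Icc_self hs)])) ht
  simp only [add_zero, one_rpow, sub_zero, ne_eq, OfNat.ofNat_ne_zero, not_false_eq_true,
    zero_pow, mul_zero] at key
  linarith

lemma one_add_mul_sq_rpow_le {p : ℝ} (hp1 : 1 ≤ p) (hp2 : p ≤ 2) {t : ℝ}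
    (ht : t ∈ Icc (0 : ℝ) 1) :
    (1 + (p - 1) * t ^ 2) ^ (p / 2) ≤ ((1 + t) ^ p + (1 - t) ^ p) / 2 := by
  have hbern := rpow_one_add_le_one_add_mul_self (s := (p - 1) * t ^ 2)
    (by nlinarith [sq_nonneg t]) (p := p / 2) (by linarith) (by linarith)
  linarith [two_add_mul_sq_le_one_add_rpow_add_one_sub_rpow hp1 hp2 ht]

lemma sq_add_mul_sq_rpow_le_of_le {p : ℝ} (hp1 : 1 ≤ p) (hp2 : p ≤ 2) {s t : ℝ} (ht : 0 ≤ t)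
    (hts : t ≤ s) : (s ^ 2 + (p - 1) * t ^ 2) ^ (p / 2) ≤ ((s + t) ^ p + (s - t) ^ p) / 2 := by
  obtain rfl | hs := (ht.trans hts).eq_or_lt
  · obtain rfl : t = 0 := le_antisymm hts ht
    simp [zero_rpow (by linarith : p ≠ 0), zero_rpow (by linarith : p / 2 ≠ 0)]
  set r := t / s
  have hr : r ∈ Icc (0 : ℝ) 1 := ⟨div_nonneg ht hs.le, div_le_one_of_le₀ hts hs.le⟩
  have htr : t = s * r := (mul_div_cancel₀ t hs.ne').symm
  have h1 : s ^ 2 + (p - 1) * t ^ 2 = s ^ 2 * (1 + (p - 1) * r ^ 2) := by rw [htr]; ring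
  have h2 : (s ^ 2) ^ (p / 2) = s ^ p := by
    rw [← rpow_natCast, ← rpow_mul hs.le]
    congr 1
    push_cast
    ring
  rw [h1, mul_rpow (sq_nonneg s) (by nlinarith [hr.1, hr.2, sq_nonneg r]), h2, htr,
    ← mul_one_add, ← mul_one_sub, mul_rpow hs.le (by linarith [hr.1]),
    mul_rpow hs.le (by linarith [hr.2]), ← mul_add, mul_div_assoc]
  exact mul_le_mul_of_nonneg_left (one_add_mul_sq_rpow_le hp1 hp2 hr) (rpow_nonneg hs.le p)

lemma sq_add_mul_sq_rpow_le {p : ℝ} (hp1 : 1 ≤ p) (hp2 : p ≤ 2) (s t : ℝ) :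
    (s ^ 2 + (p - 1) * t ^ 2) ^ (p / 2) ≤ (|s + t| ^ p + |s - t| ^ p) / 2 := by
  wlog hs : 0 ≤ s generalizing s t
  · have h := this (-s) (-t) (by linarith)
    rwa [neg_sq, neg_sq, ← neg_add, abs_neg, neg_sub_neg, abs_sub_comm] at h
  wlog ht : 0 ≤ t generalizing t
  · have h := this (-t) (by linarith)
    rwa [neg_sq, ← sub_eq_add_neg, sub_neg_eq_add, add_comm (|s - t| ^ p)] at h
  wlog hts : t ≤ s generalizing s t
  · have hst : s ≤ t := (not_le.1 hts).le
    have hswap : s ^ 2 + (p - 1) * t ^ 2 ≤ t ^ 2 + (p - 1) * s ^ 2 := by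
      nlinarith [mul_nonneg (sub_nonneg.2 hp2) (mul_nonneg (sub_nonneg.2 hst) (add_nonneg ht hs))]
    calc (s ^ 2 + (p - 1) * t ^ 2) ^ (p / 2) ≤ (t ^ 2 + (p - 1) * s ^ 2) ^ (p / 2) :=
          rpow_le_rpow (by positivity) hswap (by linarith)
      _ ≤ (|t + s| ^ p + |t - s| ^ p) / 2 := this t ht s hs hst
      _ = (|s + t| ^ p + |s - t| ^ p) / 2 := by rw [add_comm t, abs_sub_comm]
  rw [abs_of_nonneg (by linarith), abs_of_nonneg (by linarith)]
  exact sq_add_mul_sq_rpow_le_of_le hp1 hp2 ht hts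

lemma rpow_add_div_two_le {r : ℝ} (hr : 1 ≤ r) {a b : ℝ} (ha : 0 ≤ a) (hb : 0 ≤ b) :
    ((a + b) / 2) ^ r ≤ (a ^ r + b ^ r) / 2 := by
  have h := (convexOn_rpow hr).2 (mem_Ici.2 ha) (mem_Ici.2 hb) (by norm_num : (0 : ℝ) ≤ 1 / 2)
    (by norm_num : (0 : ℝ) ≤ 1 / 2) (by norm_num)
  simp only [smul_eq_mul] at h
  calc ((a + b) / 2) ^ r = (1 / 2 * a + 1 / 2 * b) ^ r := by ring_nf
    _ ≤ 1 / 2 * a ^ r + 1 / 2 * b ^ r := h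
    _ = (a ^ r + b ^ r) / 2 := by ring

end Scalar

open Finset

section pnorm

variable {p : ℝ} {d : ℕ}

lemma pnorm_nonneg (x : Fin d → ℝ) : 0 ≤ pnorm p x :=
  rpow_nonneg (sum_nonneg fun _ _ => rpow_nonneg (abs_nonneg _) _) _

lemma sq_pnorm (x : Fin d → ℝ) :
    pnorm p x ^ 2 = (∑ i, |x i| ^ p) ^ (2 / p) := by
  rw [pnorm, ← rpow_natCast, ← rpow_mul (sum_nonneg fun _ _ => rpow_nonneg (abs_nonneg _) _)]
  congr 1
  ring

lemma pnorm_smul (hp : p ≠ 0) (c : ℝ) (x : Fin d → ℝ) : pnorm p (c • x) = |c| * pnorm p x := by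
  simp only [pnorm, Pi.smul_apply, smul_eq_mul, abs_mul]
  simp_rw [mul_rpow (abs_nonneg c) (abs_nonneg _)]
  rw [← mul_sum, mul_rpow (rpow_nonneg (abs_nonneg c) _)
      (sum_nonneg fun _ _ => rpow_nonneg (abs_nonneg _) _),
    ← rpow_mul (abs_nonneg c), mul_one_div_cancel hp, rpow_one]

lemma pnorm_half_sq (x : Fin d → ℝ) :
    pnorm (p / 2) (fun i => x i ^ 2) = pnorm p x ^ 2 := by
  rw [sq_pnorm, pnorm, one_div_div]
  congr 1
  refine sum_congr rfl fun i _ => ?_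
  rw [abs_of_nonneg (sq_nonneg _), ← sq_abs, ← rpow_natCast, ← rpow_mul (abs_nonneg _)]
  congr 1
  ring

lemma pnorm_add_pnorm_le {q : ℝ} (hq0 : 0 < q) (hq1 : q ≤ 1) {a b : Fin d → ℝ} (ha : 0 ≤ a)
    (hb : 0 ≤ b) : pnorm q a + pnorm q b ≤ pnorm q (a + b) := by
  set r := 1 / q with hr
  have hr1 : 1 ≤ r := by rw [hr, le_div_iff₀ hq0]; linarith
  have : Fact (1 ≤ ENNReal.ofReal r) := ⟨by simpa using hr1⟩
  have hr' : (ENNReal.ofReal r).toReal = r := ENNReal.toReal_ofReal (by linarith)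
  have hr0 : 0 < (ENNReal.ofReal r).toReal := by rw [hr']; linarith
  have hqr : q * r = 1 := mul_one_div_cancel hq0.ne'
  have hrinv : r⁻¹ = q := by rw [hr, one_div, inv_inv]
  let v : Fin d → WithLp (ENNReal.ofReal r) (Fin 2 → ℝ) := fun i =>
    WithLp.toLp _ ![|a i| ^ q, |b i| ^ q]
  have hv : ∀ i, ‖v i‖ = |(a + b) i| ^ q := by
    intro i
    rw [PiLp.norm_eq_sum hr0, hr']
    simp only [v, Fin.sum_univ_two, Real.norm_eq_abs, Matrix.cons_val_zero, Matrix.cons_val_one,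
      Pi.add_apply, abs_of_nonneg (ha i), abs_of_nonneg (hb i),
      abs_of_nonneg (add_nonneg (ha i) (hb i)), abs_of_nonneg (rpow_nonneg (ha i) q),
      abs_of_nonneg (rpow_nonneg (hb i) q)]
    rw [← rpow_mul (ha i), ← rpow_mul (hb i), hqr, rpow_one, rpow_one, one_div, hrinv]
  have hsum : ‖∑ i, v i‖ = (pnorm q a + pnorm q b) ^ q := by
    rw [PiLp.norm_eq_sum hr0, hr']
    simp only [v, Fin.sum_univ_two, Real.norm_eq_abs, WithLp.ofLp_sum, Finset.sum_apply,
      Matrix.cons_val_zero, Matrix.cons_val_one]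
    rw [abs_of_nonneg (sum_nonneg fun _ _ => rpow_nonneg (abs_nonneg _) _),
      abs_of_nonneg (sum_nonneg fun _ _ => rpow_nonneg (abs_nonneg _) _), one_div r, hrinv]
    rfl
  have key : (pnorm q a + pnorm q b) ^ q ≤ ∑ i, |(a + b) i| ^ q := by
    simpa only [hsum, hv] using norm_sum_le univ v
  calc pnorm q a + pnorm q b = ((pnorm q a + pnorm q b) ^ q) ^ r := by
        rw [← rpow_mul (add_nonneg (pnorm_nonneg _) (pnorm_nonneg _)), hqr, rpow_one]
    _ ≤ pnorm q (a + b) :=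
        rpow_le_rpow (rpow_nonneg (add_nonneg (pnorm_nonneg _) (pnorm_nonneg _)) _) key
          (by linarith)

end pnorm

/-- 2-uniform convexity of ℓ_p with sharp constant p - 1, for 1 < p ≤ 2. -/
theorem lp_uniform_convexity (p : ℝ) (hp1 : 1 < p) (hp2 : p ≤ 2) (d : ℕ)
    (x y : Fin d → ℝ) :
    pnorm p ((x + y) / 2) ^ 2 + (p - 1) * pnorm p ((x - y) / 2) ^ 2 ≤
      (pnorm p x ^ 2 + pnorm p y ^ 2) / 2 := by
  set u := (x + y) / 2
  set v := (x - y) / 2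
  set X := ∑ i, |x i| ^ p
  set Y := ∑ i, |y i| ^ p
  have hpoint : ∀ i, |u i ^ 2 + (p - 1) * v i ^ 2| ^ (p / 2) ≤ (|x i| ^ p + |y i| ^ p) / 2 := by
    intro i
    have h := sq_add_mul_sq_rpow_le hp1.le hp2 (u i) (v i)
    obtain ⟨hx, hy⟩ : u i + v i = x i ∧ u i - v i = y i := by
      constructor <;> simp only [u, v, Pi.div_apply, Pi.add_apply, Pi.sub_apply, Pi.ofNat_apply] <;>
        ring
    rwa [abs_of_nonneg (by nlinarith [sq_nonneg (u i), sq_nonneg (v i)]), ← hx, ← hy]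
  have hmean : ((X + Y) / 2) ^ (2 / p) ≤ (X ^ (2 / p) + Y ^ (2 / p)) / 2 :=
    rpow_add_div_two_le (by rw [le_div_iff₀ (by linarith)]; linarith)
      (sum_nonneg fun i _ => rpow_nonneg (abs_nonneg (x i)) p)
      (sum_nonneg fun i _ => rpow_nonneg (abs_nonneg (y i)) p)
  calc pnorm p u ^ 2 + (p - 1) * pnorm p v ^ 2
      = pnorm (p / 2) (fun i => u i ^ 2) + pnorm (p / 2) ((p - 1) • fun i => v i ^ 2) := by
        rw [pnorm_smul (by linarith), pnorm_half_sq, pnorm_half_sq, abs_of_nonneg (by linarith)]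
    _ ≤ pnorm (p / 2) ((fun i => u i ^ 2) + (p - 1) • fun i => v i ^ 2) :=
        pnorm_add_pnorm_le (by linarith) (by linarith) (fun i => sq_nonneg _)
          (fun i => mul_nonneg (by linarith) (sq_nonneg _))
    _ ≤ ((X + Y) / 2) ^ (2 / p) := by
        rw [pnorm, one_div_div, ← sum_add_distrib, sum_div]
        exact rpow_le_rpow (sum_nonneg fun i _ => rpow_nonneg (abs_nonneg _) _)
          (sum_le_sum fun i _ => hpoint i) (by positivity)
    _ ≤ (X ^ (2 / p) + Y ^ (2 / p)) / 2 := hmean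
    _ = (pnorm p x ^ 2 + pnorm p y ^ 2) / 2 := by rw [sq_pnorm, sq_pnorm]
end

section
/- Let Z_1, ..., Z_t be i.i.d. nonnegative bounded random variables and let T ≤ t·E[Z_1]/2 (more generally T ≤ ∑_i E[Z_i] - s for s = ∑_i E[Z_i] - T ≥ 0). Then P(∑_{i=1}^t Z_i < T) ≤ exp(-(∑_i E[Z_i] - T)^2 / (2 ∑_i E[Z_i^2])). -/
/-!
Chernoff's method for the lower tail. For `x ≥ 0` one has `exp (-x) ≤ 1 - x + x ^ 2 / 2`, so for a
nonnegative `X` and `λ ≥ 0`,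
`E[exp (-λ X)] ≤ 1 - λ E[X] + λ² E[X²] / 2 ≤ exp (-λ E[X] + λ² E[X²] / 2)`.
Only second moments enter because the cubic Taylor term of `exp (-x)` has the favourable sign on
`x ≥ 0`, so no upper bound on the variables is needed. By independence these bounds multiply, and
Markov's inequality for `exp (-λ ∑ X_i)` at `λ = s / ∑ E[X_i²]` gives the claim.
-/

open MeasureTheory ProbabilityTheory Real

lemma exp_neg_le_quadratic_of_nonneg {x : ℝ} (hx : 0 ≤ x) :
    exp (-x) ≤ 1 - x + x ^ 2 / 2 := by
  rw [exp_neg, inv_le_iff_one_le_mul₀ (exp_pos x)]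
  -- the product on the right is `1 + x ^ 4 / 4`
  calc 1 ≤ (1 - x + x ^ 2 / 2) * (1 + x + x ^ 2 / 2) := by nlinarith [pow_nonneg hx 4]
    _ ≤ (1 - x + x ^ 2 / 2) * exp x := by
      gcongr
      · nlinarith [sq_nonneg (x - 1)]
      · exact quadratic_le_exp_of_nonneg hx

section

variable {Ω : Type*} [MeasurableSpace Ω] {μ : Measure Ω} {X : Ω → ℝ}

lemma integrable_exp_neg_mul_of_nonneg [IsFiniteMeasure μ] (hX : AEMeasurable X μ)
    (hX0 : 0 ≤ᵐ[μ] X) {l : ℝ} (hl : 0 ≤ l) :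
    Integrable (fun ω => exp (-l * X ω)) μ := by
  refine .of_bound (hX.const_mul (-l)).exp.aestronglyMeasurable 1 ?_
  filter_upwards [hX0] with ω hω
  rw [norm_of_nonneg (exp_nonneg _), exp_le_one_iff, neg_mul, neg_nonpos]
  exact mul_nonneg hl hω

lemma mgf_neg_le_of_nonneg [IsProbabilityMeasure μ] (hX : AEMeasurable X μ) (hX0 : 0 ≤ᵐ[μ] X)
    (hX2 : Integrable (fun ω => X ω ^ 2) μ) {l : ℝ} (hl : 0 ≤ l) :
    mgf X μ (-l) ≤ exp (-l * ∫ ω, X ω ∂μ + l ^ 2 * (∫ ω, X ω ^ 2 ∂μ) / 2) := by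
  have hX1 : Integrable X μ :=
    ((memLp_two_iff_integrable_sq hX.aestronglyMeasurable).2 hX2).integrable one_le_two
  have hlin : Integrable (fun ω => 1 - l * X ω) μ := (integrable_const 1).sub (hX1.const_mul l)
  have hquad : Integrable (fun ω => l ^ 2 * X ω ^ 2 / 2) μ := (hX2.const_mul _).div_const 2
  calc mgf X μ (-l) ≤ ∫ ω, (1 - l * X ω + l ^ 2 * X ω ^ 2 / 2) ∂μ := by
        refine integral_mono_ae (integrable_exp_neg_mul_of_nonneg hX hX0 hl) (hlin.add hquad) ?_
        filter_upwards [hX0] with ω hω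
        simpa [neg_mul, mul_pow] using exp_neg_le_quadratic_of_nonneg (mul_nonneg hl hω)
    _ = 1 + (-l * ∫ ω, X ω ∂μ + l ^ 2 * (∫ ω, X ω ^ 2 ∂μ) / 2) := by
        rw [integral_add hlin hquad, integral_sub (integrable_const 1) (hX1.const_mul l),
          integral_const_mul, integral_div, integral_const_mul]
        simp only [integral_const, probReal_univ, smul_eq_mul, one_mul]
        ring
    _ ≤ _ := by linarith [add_one_le_exp (-l * ∫ ω, X ω ∂μ + l ^ 2 * (∫ ω, X ω ^ 2 ∂μ) / 2)]

lemma measureReal_le_sub_le_exp_of_mgf_neg_le [IsFiniteMeasure μ] {m V s : ℝ} (hs : 0 ≤ s)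
    (hV : 0 ≤ V) (hint : ∀ l, 0 ≤ l → Integrable (fun ω => exp (-l * X ω)) μ)
    (hmgf : ∀ l, 0 ≤ l → mgf X μ (-l) ≤ exp (-l * m + l ^ 2 * V / 2)) :
    μ.real {ω | X ω ≤ m - s} ≤ exp (-s ^ 2 / (2 * V)) := by
  have hl : 0 ≤ s / V := div_nonneg hs hV
  calc μ.real {ω | X ω ≤ m - s} ≤ exp (s / V * (m - s)) * mgf X μ (-(s / V)) := by
        simpa using measure_le_le_exp_mul_mgf (m - s) (neg_nonpos.2 hl) (hint _ hl)
    _ ≤ exp (s / V * (m - s)) * exp (-(s / V) * m + (s / V) ^ 2 * V / 2) := by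
        gcongr
        exact hmgf _ hl
    _ = exp (-s ^ 2 / (2 * V)) := by
        rw [← exp_add]
        congr 1
        rcases hV.eq_or_lt with rfl | hV
        · -- both exponents are `0`, since `s / 0 = 0`
          simp
        · field_simp
          ring

end

/-- Maurer's inequality: for independent nonnegative random variables with finite
second moments, `P(∑ X_i ≤ ∑ E[X_i] - s) ≤ exp(-s²/(2 ∑ E[X_i²]))`. -/
theorem maurer_inequality {Ω : Type*} [MeasurableSpace Ω] (μ : Measure Ω)
    [IsProbabilityMeasure μ] (t : ℕ) (X : Fin t → Ω → ℝ)
    (hmeas : ∀ i, Measurable (X i))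
    (hpos : ∀ i ω, 0 ≤ X i ω)
    (hint : ∀ i, Integrable (fun ω => (X i ω) ^ 2) μ)
    (hindep : iIndepFun X μ)
    (s : ℝ) (hs : 0 ≤ s) :
    μ {ω | ∑ i, X i ω ≤ (∑ i, ∫ ω, X i ω ∂μ) - s} ≤
      ENNReal.ofReal (Real.exp (-(s ^ 2) / (2 * ∑ i, ∫ ω, (X i ω) ^ 2 ∂μ))) := by
  have hmgf (l : ℝ) (hl : 0 ≤ l) : mgf (∑ i, X i) μ (-l) ≤
      exp (-l * ∑ i, ∫ ω, X i ω ∂μ + l ^ 2 * (∑ i, ∫ ω, X i ω ^ 2 ∂μ) / 2) := by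
    rw [hindep.mgf_sum hmeas, Finset.mul_sum, Finset.mul_sum, Finset.sum_div,
      ← Finset.sum_add_distrib, exp_sum]
    exact Finset.prod_le_prod (fun i _ => mgf_nonneg) fun i _ =>
      mgf_neg_le_of_nonneg (hmeas i).aemeasurable (.of_forall (hpos i)) (hint i) hl
  have hsum_meas : Measurable (∑ i, X i) := by fun_prop
  have hsum_nonneg : 0 ≤ ∑ i, X i := Finset.sum_nonneg fun i _ => hpos i
  have htail := measureReal_le_sub_le_exp_of_mgf_neg_le hs
    (Finset.sum_nonneg fun i _ => integral_nonneg fun ω => sq_nonneg (X i ω))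
    (fun l hl => integrable_exp_neg_mul_of_nonneg hsum_meas.aemeasurable
      (.of_forall hsum_nonneg) hl) hmgf
  rw [ENNReal.le_ofReal_iff_toReal_le (measure_ne_top μ _) (exp_pos _).le]
  simpa [measureReal_def, neg_div] using htail
end

section
/- Let Y be a nonnegative random variable whose density φ(x) on [1,∞) satisfies a/x^{p+1} - b/x^3 ≤ φ(x) ≤ 2^{(p+1)/2}a/x^{p+1} + b/x^3 for constants a, b > 0 and 1 < p < 2. Define Z_M = min(Y, M) for M > 1. Then a·ln M - C ≤ E[Z_M^p] ≤ 2^{(p+1)/2}a·ln M + C for some constant C independent of M; in particular E[Z_M^p] = Θ(ln M) as M → ∞. -/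
/-!
On `[1, ∞)` the law of `Y` has density `φ`, so the part of `E[min(Y, M)^p]` over `(1, ∞)` is
`∫₁^∞ min(x, M)^p φ(x) dx`. Against the main term `x^{-(p+1)}` of `φ` this integral is exactly
`log M + 1/p`: the `log M` comes from `[1, M]`, the `1/p` from the tail, where `min(x, M)^p = M^p`.
Against the error term `x^{-3}` it is at most `∫₁^∞ x^{p-3} dx = 1/(2-p)`, finite because `p < 2`.
The part over `[0, 1]` lies in `[0, 1]`.
-/

open MeasureTheory Set Real

section Density

variable {α : Type*} [MeasurableSpace α] {μ ν : Measure α} {s : Set α} {φ : α → ℝ}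

theorem restrict_eq_withDensity_ofReal (hs : MeasurableSet s) (hφ0 : ∀ x, 0 ≤ φ x)
    (hφ : IntegrableOn φ s ν)
    (hμ : ∀ t, MeasurableSet t → t ⊆ s → μ t = ENNReal.ofReal (∫ x in t, φ x ∂ν)) :
    μ.restrict s = (ν.restrict s).withDensity fun x => ENNReal.ofReal (φ x) := by
  ext t ht
  rw [Measure.restrict_apply ht, withDensity_apply _ ht, Measure.restrict_restrict ht,
    hμ _ (ht.inter hs) inter_subset_right,
    ofReal_integral_eq_lintegral_ofReal (hφ.mono_set inter_subset_right)
      (.of_forall hφ0)]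

theorem setIntegral_eq_setIntegral_mul_of_restrict_eq_withDensity (hφm : Measurable φ)
    (hφ0 : ∀ x, 0 ≤ φ x)
    (hμ : μ.restrict s = (ν.restrict s).withDensity fun x => ENNReal.ofReal (φ x))
    (f : α → ℝ) :
    ∫ x in s, f x ∂μ = ∫ x in s, f x * φ x ∂ν := by
  rw [hμ, integral_withDensity_eq_integral_toReal_smul hφm.ennreal_ofReal
    (.of_forall fun _ => ENNReal.ofReal_lt_top)]
  simp only [ENNReal.toReal_ofReal (hφ0 _), smul_eq_mul, mul_comm]

end Density

section PowerIntegrals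

variable {p q M : ℝ}

theorem integrableOn_Ioi_one_min_rpow_div_rpow (hp : 0 ≤ p) (hq : 1 < q) (hM : 0 ≤ M) :
    IntegrableOn (fun x => min x M ^ p / x ^ q) (Ioi 1) := by
  refine ((integrableOn_Ioi_rpow_of_lt (a := -q) (by linarith) one_pos).const_mul (M ^ p)).mono'
    (by fun_prop : Measurable fun x : ℝ => min x M ^ p / x ^ q).aestronglyMeasurable ?_
  filter_upwards [ae_restrict_mem measurableSet_Ioi] with x (hx : 1 < x)
  have hmin : 0 ≤ min x M := le_min (by linarith) hM
  rw [rpow_neg (by linarith), ← div_eq_mul_inv,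
    norm_of_nonneg (div_nonneg (rpow_nonneg hmin p) (rpow_nonneg (by linarith) q))]
  gcongr
  exact min_le_right x M

theorem integral_Ioi_one_min_rpow_div_rpow_add_one (hp : 0 < p) (hM : 1 ≤ M) :
    ∫ x in Ioi 1, min x M ^ p / x ^ (p + 1) = log M + p⁻¹ := by
  have hint := integrableOn_Ioi_one_min_rpow_div_rpow hp.le (by linarith : 1 < p + 1)
    (zero_le_one.trans hM)
  rw [← Ioc_union_Ioi_eq_Ioi hM, setIntegral_union (Ioc_disjoint_Ioi le_rfl) measurableSet_Ioi
    (hint.mono_set Ioc_subset_Ioi_self) (hint.mono_set (Ioi_subset_Ioi hM))]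
  have hbody : ∫ x in Ioc 1 M, min x M ^ p / x ^ (p + 1) = log M := by
    rw [setIntegral_congr_fun measurableSet_Ioc (g := fun x => x⁻¹) fun x hx => ?_,
      ← intervalIntegral.integral_of_le hM, integral_inv_of_pos one_pos (by linarith), div_one]
    have hx0 : 0 < x := by linarith [hx.1]
    rw [min_eq_left hx.2, rpow_add hx0, rpow_one]
    field_simp
  have htail : ∫ x in Ioi M, min x M ^ p / x ^ (p + 1) = p⁻¹ := by
    have hM0 : 0 < M := by linarith
    rw [setIntegral_congr_fun measurableSet_Ioi (g := fun x => M ^ p * x ^ (-(p + 1)))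
      fun x (hx : M < x) => ?_, integral_const_mul,
      integral_Ioi_rpow_of_lt (by linarith) hM0, show -(p + 1) + 1 = -p by ring, rpow_neg hM0.le]
    · have := (rpow_pos_of_pos hM0 p).ne'
      field_simp
    · simp only [min_eq_right hx.le, rpow_neg (by linarith : 0 ≤ x), div_eq_mul_inv]
  rw [hbody, htail]

theorem integral_Ioi_one_min_rpow_div_rpow_le (hp : 0 ≤ p) (hpq : p + 1 < q) (hM : 0 ≤ M) :
    ∫ x in Ioi 1, min x M ^ p / x ^ q ≤ (q - p - 1)⁻¹ := by
  calc ∫ x in Ioi 1, min x M ^ p / x ^ q ≤ ∫ x in Ioi 1, x ^ (p - q) := by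
        refine setIntegral_mono_on
          (integrableOn_Ioi_one_min_rpow_div_rpow hp (by linarith) hM)
          (integrableOn_Ioi_rpow_of_lt (by linarith) one_pos) measurableSet_Ioi
          fun x (hx : 1 < x) => ?_
        have hx0 : 0 < x := by linarith
        rw [rpow_sub hx0]
        gcongr
        exact min_le_left x M
    _ = (q - p - 1)⁻¹ := by
        rw [integral_Ioi_rpow_of_lt (by linarith) one_pos, one_rpow, neg_div, ← div_neg,
          one_div]
        ring_nf

end PowerIntegrals

section DensityBounds

variable {p M A B : ℝ} {φ : ℝ → ℝ}

theorem integrableOn_Ioi_one_of_le_div_rpow_add_div_pow (hφm : Measurable φ)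
    (hφ0 : ∀ x, 0 ≤ φ x) (hp : 1 < p)
    (hφ : ∀ x > 1, φ x ≤ A / x ^ p + B / x ^ 3) : IntegrableOn φ (Ioi 1) := by
  have hpow (r : ℝ) (hr : 1 < r) : IntegrableOn (fun x : ℝ => (x ^ r)⁻¹) (Ioi 1) :=
    (integrableOn_Ioi_rpow_of_lt (neg_lt_neg hr) one_pos).congr_fun
      (fun x (hx : 1 < x) => rpow_neg (by linarith) r) measurableSet_Ioi
  refine (((hpow p hp).const_mul A).add ((hpow 3 (by norm_num)).const_mul B)).mono'
    hφm.aestronglyMeasurable ?_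
  filter_upwards [ae_restrict_mem measurableSet_Ioi] with x (hx : 1 < x)
  simpa only [Pi.add_apply, norm_of_nonneg (hφ0 x), rpow_ofNat, div_eq_mul_inv] using hφ x hx

theorem integrableOn_Ioi_one_min_rpow_mul (hp : 0 ≤ p) (hM : 0 ≤ M) (hφ : IntegrableOn φ (Ioi 1)) :
    IntegrableOn (fun x => min x M ^ p * φ x) (Ioi 1) := by
  refine hφ.bdd_mul (c := M ^ p) (by fun_prop : Measurable fun x : ℝ => min x M ^ p).aestronglyMeasurable ?_
  filter_upwards [ae_restrict_mem measurableSet_Ioi] with x (hx : 1 < x)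
  have hmin : 0 ≤ min x M := le_min (by linarith) hM
  rw [norm_of_nonneg (rpow_nonneg hmin p)]
  gcongr
  exact min_le_right x M

theorem setIntegral_Ioi_one_min_rpow_mul_le (hp0 : 0 < p) (hp2 : p < 2) (hM : 1 ≤ M)
    (hB : 0 ≤ B) (hφ : IntegrableOn φ (Ioi 1))
    (hφle : ∀ x > 1, φ x ≤ A / x ^ (p + 1) + B / x ^ 3) :
    ∫ x in Ioi 1, min x M ^ p * φ x ≤ A * (log M + p⁻¹) + B * (2 - p)⁻¹ := by
  have hM0 : 0 ≤ M := zero_le_one.trans hM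
  have hmain := integrableOn_Ioi_one_min_rpow_div_rpow hp0.le (by linarith : 1 < p + 1) hM0
  have herr := integrableOn_Ioi_one_min_rpow_div_rpow hp0.le (by norm_num : (1 : ℝ) < 3) hM0
  have herr_le := integral_Ioi_one_min_rpow_div_rpow_le hp0.le (by linarith : p + 1 < 3) hM0
  simp only [rpow_ofNat] at herr herr_le
  calc ∫ x in Ioi 1, min x M ^ p * φ x
      ≤ ∫ x in Ioi 1, (A * (min x M ^ p / x ^ (p + 1)) + B * (min x M ^ p / x ^ 3)) := by
        refine setIntegral_mono_on (integrableOn_Ioi_one_min_rpow_mul hp0.le hM0 hφ)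
          ((hmain.const_mul A).add (herr.const_mul B)) measurableSet_Ioi fun x (hx : 1 < x) => ?_
        calc min x M ^ p * φ x ≤ min x M ^ p * (A / x ^ (p + 1) + B / x ^ 3) := by
              gcongr
              exact hφle x hx
          _ = _ := by ring
    _ = A * (log M + p⁻¹) + B * ∫ x in Ioi 1, min x M ^ p / x ^ 3 := by
        rw [integral_add (hmain.const_mul A) (herr.const_mul B), integral_const_mul,
          integral_const_mul, integral_Ioi_one_min_rpow_div_rpow_add_one hp0 hM]
    _ ≤ A * (log M + p⁻¹) + B * (2 - p)⁻¹ := by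
        gcongr
        exact herr_le.trans_eq (by ring)

theorem le_setIntegral_Ioi_one_min_rpow_mul (hp0 : 0 < p) (hp2 : p < 2) (hM : 1 ≤ M)
    (hB : 0 ≤ B) (hφ : IntegrableOn φ (Ioi 1))
    (hleφ : ∀ x > 1, A / x ^ (p + 1) - B / x ^ 3 ≤ φ x) :
    A * (log M + p⁻¹) - B * (2 - p)⁻¹ ≤ ∫ x in Ioi 1, min x M ^ p * φ x := by
  have hM0 : 0 ≤ M := zero_le_one.trans hM
  have hmain := integrableOn_Ioi_one_min_rpow_div_rpow hp0.le (by linarith : 1 < p + 1) hM0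
  have herr := integrableOn_Ioi_one_min_rpow_div_rpow hp0.le (by norm_num : (1 : ℝ) < 3) hM0
  have herr_le := integral_Ioi_one_min_rpow_div_rpow_le hp0.le (by linarith : p + 1 < 3) hM0
  simp only [rpow_ofNat] at herr herr_le
  calc A * (log M + p⁻¹) - B * (2 - p)⁻¹
      ≤ A * (log M + p⁻¹) - B * ∫ x in Ioi 1, min x M ^ p / x ^ 3 := by
        gcongr
        exact herr_le.trans_eq (by ring)
    _ = ∫ x in Ioi 1, (A * (min x M ^ p / x ^ (p + 1)) - B * (min x M ^ p / x ^ 3)) := by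
        rw [integral_sub (hmain.const_mul A) (herr.const_mul B), integral_const_mul,
          integral_const_mul, integral_Ioi_one_min_rpow_div_rpow_add_one hp0 hM]
    _ ≤ ∫ x in Ioi 1, min x M ^ p * φ x := by
        refine setIntegral_mono_on ((hmain.const_mul A).sub (herr.const_mul B))
          (integrableOn_Ioi_one_min_rpow_mul hp0.le hM0 hφ) measurableSet_Ioi
          fun x (hx : 1 < x) => ?_
        calc A * (min x M ^ p / x ^ (p + 1)) - B * (min x M ^ p / x ^ 3)
            = min x M ^ p * (A / x ^ (p + 1) - B / x ^ 3) := by ring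
          _ ≤ min x M ^ p * φ x := by
              gcongr
              exact hleφ x hx

end DensityBounds

section TruncatedMoments

variable {μ : Measure ℝ} {p M : ℝ}

theorem ae_nonneg_of_measure_Iio_zero (hμ : μ (Iio 0) = 0) : ∀ᵐ x ∂μ, 0 ≤ x := by
  rw [ae_iff]
  simp only [not_le]
  exact hμ

theorem integrable_min_rpow [IsFiniteMeasure μ] (hμ : μ (Iio 0) = 0) (hp : 0 ≤ p)
    (hM : 0 ≤ M) : Integrable (fun x => min x M ^ p) μ := by
  refine .of_bound (by fun_prop : Measurable fun x : ℝ => min x M ^ p).aestronglyMeasurable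
    (M ^ p) ?_
  filter_upwards [ae_nonneg_of_measure_Iio_zero hμ] with x hx
  rw [norm_of_nonneg (rpow_nonneg (le_min hx hM) p)]
  gcongr
  exact min_le_right x M

theorem setIntegral_Iic_one_min_rpow_mem_Icc [IsProbabilityMeasure μ] (hμ : μ (Iio 0) = 0)
    (hp : 0 ≤ p) (hM : 0 ≤ M) : ∫ x in Iic 1, min x M ^ p ∂μ ∈ Icc 0 1 := by
  have hbound : ∀ᵐ x ∂μ.restrict (Iic 1), min x M ^ p ∈ Icc 0 1 := by
    filter_upwards [ae_restrict_mem measurableSet_Iic,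
      ae_restrict_of_ae (ae_nonneg_of_measure_Iio_zero hμ)] with x (hx1 : x ≤ 1) hx0
    have hmin : 0 ≤ min x M := le_min hx0 hM
    exact ⟨rpow_nonneg hmin p, rpow_le_one hmin ((min_le_left x M).trans hx1) hp⟩
  refine ⟨integral_nonneg_of_ae (hbound.mono fun x hx => hx.1), ?_⟩
  calc ∫ x in Iic 1, min x M ^ p ∂μ ≤ 1 * (μ.restrict (Iic 1)).real univ :=
        (le_abs_self _).trans (norm_integral_le_of_norm_le_const
          (hbound.mono fun x hx => (norm_of_nonneg hx.1).trans_le hx.2))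
    _ ≤ 1 := by
        rw [one_mul, measureReal_restrict_apply_univ]
        exact measureReal_le_one

end TruncatedMoments

/-- Truncated p-th moment bound: `E[min(Y,M)^p] = Θ(ln M)`. -/
theorem truncated_pth_moment (p a b : ℝ) (hp1 : 1 < p) (hp2 : p < 2)
    (ha : 0 < a) (hb : 0 < b)
    (μ : Measure ℝ) [IsProbabilityMeasure μ] (hsupp : μ (Set.Iio 0) = 0)
    (φ : ℝ → ℝ) (hφm : Measurable φ) (hφ0 : ∀ x, 0 ≤ φ x)
    (hdens : ∀ s : Set ℝ, MeasurableSet s → s ⊆ Set.Ici 1 →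
      μ s = ENNReal.ofReal (∫ x in s, φ x))
    (hlb : ∀ x ≥ (1 : ℝ), a / x ^ (p + 1) - b / x ^ 3 ≤ φ x)
    (hub : ∀ x ≥ (1 : ℝ), φ x ≤ 2 ^ ((p + 1) / 2) * a / x ^ (p + 1) + b / x ^ 3) :
    ∃ C : ℝ, ∀ M > (1 : ℝ),
      a * Real.log M - C ≤ ∫ x, (min x M) ^ p ∂μ ∧
      ∫ x, (min x M) ^ p ∂μ ≤ 2 ^ ((p + 1) / 2) * a * Real.log M + C := by
  set c : ℝ := 2 ^ ((p + 1) / 2)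
  have hp0 : 0 < p := zero_lt_one.trans hp1
  have hφ : IntegrableOn φ (Ioi 1) := integrableOn_Ioi_one_of_le_div_rpow_add_div_pow hφm hφ0
    (by linarith) fun x hx => hub x hx.le
  have hμφ : μ.restrict (Ioi 1) = (volume.restrict (Ioi 1)).withDensity
      fun x => ENNReal.ofReal (φ x) :=
    restrict_eq_withDensity_ofReal measurableSet_Ioi hφ0 hφ fun s hs hs1 =>
      hdens s hs (hs1.trans Ioi_subset_Ici_self)
  refine ⟨c * a * p⁻¹ + b * (2 - p)⁻¹ + 1, fun M hM => ?_⟩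
  have hsplit : ∫ x, min x M ^ p ∂μ
      = ∫ x in Iic 1, min x M ^ p ∂μ + ∫ x in Ioi 1, min x M ^ p * φ x := by
    rw [← integral_add_compl measurableSet_Iic
      (integrable_min_rpow hsupp hp0.le (by linarith)), compl_Iic,
      setIntegral_eq_setIntegral_mul_of_restrict_eq_withDensity hφm hφ0 hμφ]
  obtain ⟨hlow0, hlow1⟩ := setIntegral_Iic_one_min_rpow_mem_Icc hsupp hp0.le (by linarith : 0 ≤ M)
  have hlower := le_setIntegral_Ioi_one_min_rpow_mul hp0 hp2 hM.le hb.le hφ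
    fun x hx => hlb x hx.le
  have hupper := setIntegral_Ioi_one_min_rpow_mul_le (A := c * a) hp0 hp2 hM.le hb.le hφ
    fun x hx => hub x hx.le
  have : 0 ≤ a * p⁻¹ := by positivity
  have : 0 ≤ c * a * p⁻¹ := by positivity
  constructor <;> linarith
end
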